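/- arXiv:2112.05042 — 2 statements merged into one kernel-verified Lean document; each statement's English description precedes it below -/
import Mathlib

section
/- Let T be a finite subset of R^d of size at least 3, let F be a countable family of 2d-variate real polynomials such that f(p, q) ≠ 0 for every f in F and all distinct p, q in T, and let k be a positive integer. Then there exists a finite set X ⊂ R^d such that f(p, q) ≠ 0 for every f in F and all distinct p, q in X, and every k-coloring of X contains a monochromatic homothetic copy of T. -/
/-- `T'` is a homothetic copy of `T` in `ℝ^d`. -/
def IsHomotheticCopy {d : ℕ} (T T' : Set (Fin d → ℝ)) : Prop :=
  ∃ (p : Fin d → ℝ) (l : ℝ), 0 < l ∧ T' = (fun q => p + l • q) '' T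

/-- A countable family of `2d`-variate polynomials respects a set `S ⊆ ℝ^d`. -/
def Respects {d : ℕ} (F : ℕ → MvPolynomial (Fin d ⊕ Fin d) ℝ)
    (S : Set (Fin d → ℝ)) : Prop :=
  ∀ i, ∀ p ∈ S, ∀ q ∈ S, p ≠ q → MvPolynomial.eval (Sum.elim p q) (F i) ≠ 0

/-! By Hales–Jewett there is a finite `ι` such that every `k`-colouring of the cube `ι → T` has a
monochromatic combinatorial line. Embed the cube in `ℝ^d` by `w ↦ ∑ i, ε i • w i` with positive
weights `ε`: a line whose moving coordinates form `W` goes to a homothetic copy of `T` with ratio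
`∑ i ∈ W, ε i`. For `f ∈ F` and `w ≠ w'`, the map `ε ↦ f (∑ ε i • w i, ∑ ε i • w' i)` is a
polynomial in `ε`; it is nonzero since at the unit vector of a coordinate `i` with `w i ≠ w' i`
it equals `f (w i, w' i) ≠ 0`. By Baire, some positive `ε` avoids all these countably many
zero sets, and then the image of the cube respects `F`. -/

open MvPolynomial

theorem MvPolynomial.dense_setOf_eval_ne_zero {σ : Type*} [Fintype σ] {P : MvPolynomial σ ℝ}
    (hP : P ≠ 0) : Dense {x : σ → ℝ | eval x P ≠ 0} := by
  rw [Metric.dense_iff]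
  intro x r hr
  by_contra h
  refine hP (funext_set (fun i => Metric.ball (x i) r) (fun i => ?_) fun y hy => ?_)
  · rw [Real.ball_eq_Ioo]
    exact Set.Ioo_infinite (by linarith)
  · rw [← ball_pi x hr] at hy
    by_contra hne
    exact h ⟨y, hy, by simpa using hne⟩

theorem MvPolynomial.exists_pos_forall_eval_ne_zero {σ κ : Type*} [Fintype σ] [Countable κ]
    (P : κ → MvPolynomial σ ℝ) (hP : ∀ k, P k ≠ 0) :
    ∃ x : σ → ℝ, (∀ i, 0 < x i) ∧ ∀ k, eval x (P k) ≠ 0 := by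
  have hdense : Dense (⋂ k, {x : σ → ℝ | eval x (P k) ≠ 0}) :=
    dense_iInter_of_isOpen (fun k => isOpen_ne.preimage (continuous_eval (P k)))
      fun k => dense_setOf_eval_ne_zero (hP k)
  have hpos : IsOpen (Set.univ.pi fun _ : σ => Set.Ioi (0 : ℝ)) :=
    isOpen_set_pi Set.finite_univ fun _ _ => isOpen_Ioi
  obtain ⟨x, hx, hxP⟩ :=
    hdense.inter_open_nonempty _ hpos ⟨1, fun _ _ => Set.mem_Ioi.mpr one_pos⟩
  exact ⟨x, fun i => hx i trivial, Set.mem_iInter.mp hxP⟩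

theorem MvPolynomial.exists_eval_eq_eval_sum_smul {R σ ι : Type*} [CommSemiring R] [Fintype ι]
    (P : MvPolynomial σ R) (u : ι → σ → R) :
    ∃ Q : MvPolynomial ι R, ∀ ε, eval ε Q = eval (∑ i, ε i • u i) P := by
  refine ⟨bind₁ (fun s => ∑ i, C (u i s) * X i) P, fun ε => ?_⟩
  rw [← aeval_eq_eval, aeval_bind₁, aeval_eq_eval]
  congr
  ext s
  simp [Finset.sum_apply, mul_comm]

theorem MvPolynomial.exists_pos_forall_eval_sum_smul_ne_zero {σ ι κ : Type*} [Fintype ι]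
    [Countable κ] (P : κ → MvPolynomial σ ℝ) (u : κ → ι → σ → ℝ)
    (hP : ∀ k, ∃ i, eval (u k i) (P k) ≠ 0) :
    ∃ ε : ι → ℝ, (∀ i, 0 < ε i) ∧ ∀ k, eval (∑ i, ε i • u k i) (P k) ≠ 0 := by
  classical
  choose Q hQ using fun k => exists_eval_eq_eval_sum_smul (P k) (u k)
  have hQ0 : ∀ k, Q k ≠ 0 := by
    intro k hk
    obtain ⟨i, hi⟩ := hP k
    exact hi (by simpa [hk] using (hQ k (Pi.single i 1)).symm)
  obtain ⟨ε, hpos, hne⟩ := exists_pos_forall_eval_ne_zero Q hQ0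
  exact ⟨ε, hpos, fun k => hQ k ε ▸ hne k⟩

theorem Combinatorics.Line.sum_smul_apply {α ι R E : Type*} [Fintype ι] [Semiring R]
    [AddCommMonoid E] [Module R E] (l : Line α ι) (ε : ι → R) (v : α → E) (a : α) :
    ∑ i, ε i • v (l a i) =
      ∑ i, ε i • (l.idxFun i).elim 0 v + (∑ i with l.idxFun i = none, ε i) • v a := by
  classical
  rw [Finset.sum_smul, Finset.sum_filter, ← Finset.sum_add_distrib]
  refine Finset.sum_congr rfl fun i _ => ?_
  cases h : l.idxFun i <;> simp [h]

theorem Sum.elim_sum_smul {σ τ ι R M : Type*} [Fintype ι] [Semiring R] [AddCommMonoid M]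
    [Module R M] (ε : ι → R) (v : ι → σ → M) (w : ι → τ → M) :
    Sum.elim (∑ i, ε i • v i) (∑ i, ε i • w i) = ∑ i, ε i • Sum.elim (v i) (w i) := by
  ext (s | s) <;> simp [Finset.sum_apply]

theorem exists_pos_respects_range_sum_smul {d : ℕ} {T : Set (Fin d → ℝ)} [Finite T]
    {F : ℕ → MvPolynomial (Fin d ⊕ Fin d) ℝ} (hF : Respects F T) (ι : Type*) [Fintype ι] :
    ∃ ε : ι → ℝ, (∀ i, 0 < ε i) ∧
      Respects F (Set.range fun w : ι → T => ∑ i, ε i • (w i : Fin d → ℝ)) := by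
  obtain ⟨ε, hpos, hε⟩ := exists_pos_forall_eval_sum_smul_ne_zero
    (κ := ℕ × {p : (ι → T) × (ι → T) // p.1 ≠ p.2}) (fun k => F k.1)
    (fun k i => Sum.elim (k.2.1.1 i) (k.2.1.2 i)) fun ⟨n, ⟨w, w'⟩, hne⟩ => by
      obtain ⟨i, hi⟩ := Function.ne_iff.mp hne
      exact ⟨i, hF n _ (w i).2 _ (w' i).2 (Subtype.coe_injective.ne hi)⟩
  refine ⟨ε, hpos, ?_⟩
  rintro n _ ⟨w, rfl⟩ _ ⟨w', rfl⟩ hne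
  have hww : w ≠ w' := by rintro rfl; exact hne rfl
  rw [Sum.elim_sum_smul]
  exact hε (n, ⟨(w, w'), hww⟩)

theorem isHomotheticCopy_range_sum_smul_line {d : ℕ} {T : Set (Fin d → ℝ)} {ι : Type*}
    [Fintype ι] (l : Combinatorics.Line T ι) {ε : ι → ℝ} (hε : ∀ i, 0 < ε i) :
    IsHomotheticCopy T (Set.range fun a : T => ∑ i, ε i • (l a i : Fin d → ℝ)) := by
  classical
  refine ⟨∑ i, ε i • (l.idxFun i).elim 0 Subtype.val, ∑ i with l.idxFun i = none, ε i,
    Finset.sum_pos (fun i _ => hε i) ?_, ?_⟩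
  · obtain ⟨i, hi⟩ := l.proper
    exact ⟨i, by simp [hi]⟩
  · rw [Set.image_eq_range]
    simp_rw [l.sum_smul_apply]

theorem stmt_12_general (d : ℕ) (T : Set (Fin d → ℝ)) (hTfin : T.Finite)
    (F : ℕ → MvPolynomial (Fin d ⊕ Fin d) ℝ) (hF : Respects F T) (k : ℕ) :
    ∃ X : Set (Fin d → ℝ), X.Finite ∧ Respects F X ∧
      ∀ χ : (Fin d → ℝ) → Fin k, ∃ T' ⊆ X, IsHomotheticCopy T T' ∧
        ∀ p ∈ T', ∀ q ∈ T', χ p = χ q := by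
  have := hTfin.to_subtype
  obtain ⟨ι, _, hHJ⟩ := Combinatorics.Line.exists_mono_in_high_dimension T (Fin k)
  obtain ⟨ε, hε, hX⟩ := exists_pos_respects_range_sum_smul hF ι
  set embed : (ι → T) → Fin d → ℝ := fun w => ∑ i, ε i • (w i : Fin d → ℝ)
  refine ⟨Set.range embed, Set.finite_range _, hX, fun χ => ?_⟩
  obtain ⟨l, c, hl⟩ := hHJ (χ ∘ embed)
  refine ⟨Set.range (embed ∘ l), Set.range_comp_subset_range _ _,
    isHomotheticCopy_range_sum_smul_line l hε, ?_⟩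
  rintro _ ⟨a, rfl⟩ _ ⟨b, rfl⟩
  exact (hl a).trans (hl b).symm

theorem stmt_12 (d : ℕ) (T : Set (Fin d → ℝ)) (hTfin : T.Finite) (hT3 : 3 ≤ T.ncard)
    (F : ℕ → MvPolynomial (Fin d ⊕ Fin d) ℝ) (hF : Respects F T) (k : ℕ) (hk : 0 < k) :
    ∃ X : Set (Fin d → ℝ), X.Finite ∧ Respects F X ∧
      ∀ χ : (Fin d → ℝ) → Fin k, ∃ T' ⊆ X, IsHomotheticCopy T T' ∧
        ∀ p ∈ T', ∀ q ∈ T', χ p = χ q :=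
  stmt_12_general d T hTfin F hF k
end

section
/- For every finite set T ⊂ R^d and every positive integer k, there exists a finite set X ⊂ R^d such that every k-coloring of X contains a monochromatic homothetic copy of T. -/
/-!
Apply the Hales–Jewett theorem to the alphabet `T` and map a word `w : ι → T` to the sum
`∑ i, w i`. Along a combinatorial line the fixed coordinates contribute a constant `p` and each
of the `n > 0` free coordinates contributes the letter `t`, so the line is mapped onto the
homothetic copy `p + n • T`; a monochromatic line therefore gives a monochromatic copy of `T`.
-/

open Finset

namespace Combinatorics.Line

theorem sum_apply {α ι M : Type*} [Fintype ι] [AddCommMonoid M] (l : Line α ι) (F : α → M)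
    (x : α) :
    ∑ i, F (l x i) = ∑ i, (l.idxFun i).elim 0 F + #{i | l.idxFun i = none} • F x := by
  rw [← sum_const, sum_filter, ← sum_add_distrib]
  refine sum_congr rfl fun i _ => ?_
  cases h : l.idxFun i <;> simp [h]

theorem card_filter_idxFun_eq_none_pos {α ι : Type*} [Fintype ι] (l : Line α ι) :
    0 < #{i | l.idxFun i = none} :=
  card_pos.2 <| let ⟨i, hi⟩ := l.proper; ⟨i, by simp [hi]⟩

end Combinatorics.Line

theorem exists_finite_forall_exists_mono_homothetic {M κ : Type*} [AddCommMonoid M] [Finite κ]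
    (T : Set M) (hT : T.Finite) :
    ∃ X : Set M, X.Finite ∧ ∀ χ : M → κ, ∃ (p : M) (n : ℕ), 0 < n ∧
      (fun t => p + n • t) '' T ⊆ X ∧ ∃ c, ∀ t ∈ T, χ (p + n • t) = c := by
  have := hT.to_subtype
  obtain ⟨ι, _, hι⟩ := Combinatorics.Line.exists_mono_in_high_dimension T κ
  let word_sum (w : ι → T) : M := ∑ i, (w i : M)
  refine ⟨Set.range word_sum, Set.finite_range _, fun χ => ?_⟩
  obtain ⟨l, c, hc⟩ := hι (χ ∘ word_sum)
  set p : M := ∑ i, (l.idxFun i).elim 0 Subtype.val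
  have word_sum_line (t : T) : word_sum (l t) = p + #{i | l.idxFun i = none} • (t : M) :=
    l.sum_apply Subtype.val t
  refine ⟨p, _, l.card_filter_idxFun_eq_none_pos, ?_, c, fun t ht => ?_⟩
  · rintro _ ⟨t, ht, rfl⟩
    exact ⟨l ⟨t, ht⟩, word_sum_line ⟨t, ht⟩⟩
  · rw [← word_sum_line ⟨t, ht⟩]
    exact hc ⟨t, ht⟩

theorem stmt_13_general (d : ℕ) (T : Set (Fin d → ℝ)) (hT : T.Finite) (k : ℕ) :
    ∃ X : Set (Fin d → ℝ), X.Finite ∧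
      ∀ χ : (Fin d → ℝ) → Fin k, ∃ T' ⊆ X,
        (∃ (p : Fin d → ℝ) (l : ℝ), 0 < l ∧ T' = (fun q => p + l • q) '' T) ∧
        ∀ p ∈ T', ∀ q ∈ T', χ p = χ q := by
  obtain ⟨X, hX, hmono⟩ := exists_finite_forall_exists_mono_homothetic (κ := Fin k) T hT
  refine ⟨X, hX, fun χ => ?_⟩
  obtain ⟨p, n, hn, hsub, c, hc⟩ := hmono χ
  simp only [← Nat.cast_smul_eq_nsmul ℝ] at hsub hc
  refine ⟨_, hsub, ⟨p, n, Nat.cast_pos.2 hn, rfl⟩, ?_⟩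
  rintro _ ⟨s, hs, rfl⟩ _ ⟨t, ht, rfl⟩
  rw [hc s hs, hc t ht]

theorem stmt_13 (d : ℕ) (T : Set (Fin d → ℝ)) (hT : T.Finite) (k : ℕ) (hk : 0 < k) :
    ∃ X : Set (Fin d → ℝ), X.Finite ∧
      ∀ χ : (Fin d → ℝ) → Fin k, ∃ T' ⊆ X,
        (∃ (p : Fin d → ℝ) (l : ℝ), 0 < l ∧ T' = (fun q => p + l • q) '' T) ∧
        ∀ p ∈ T', ∀ q ∈ T', χ p = χ q :=
  stmt_13_general d T hT k
end
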